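/- arXiv:2303.11451 — 2 statements merged into one kernel-verified Lean document; each statement's English description precedes it below -/
import Mathlib

section
/- Let P be a poset and α > 0 a limit ordinal. If the poset I(P^{<α}) of initial segments of the embeddability quasi-order P^{<α}, ordered by inclusion, is wqo, then both P^α and P^{<α} are wqo. -/
universe u v

open Set

/-- `r` is an initial segment of `X ⊆ ℕ`: `r ⊆ X` and every element of `X` not in `r`
is greater than every element of `r`. -/
def NatInitSeg (r : Finset ℕ) (X : Set ℕ) : Prop :=
  ↑r ⊆ X ∧ ∀ x ∈ X, x ∉ r → ∀ y ∈ r, y < x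

/-- `B` is a barrier: an infinite inclusion-antichain of finite subsets of `ℕ` such that
every infinite subset of the base has an initial segment in `B`. -/
def IsBarrier (B : Set (Finset ℕ)) : Prop :=
  B.Infinite ∧
  (∀ x ∈ B, ∀ y ∈ B, x ⊆ y → x = y) ∧
  (∀ X : Set ℕ, X ⊆ (⋃ b ∈ B, (↑b : Set ℕ)) → X.Infinite → ∃ r ∈ B, NatInitSeg r X)

/-- `t` is a proper initial segment of the finite set `s`. -/
def FinsetProperInitSeg (t s : Finset ℕ) : Prop :=
  t ⊆ s ∧ t ≠ s ∧ ∀ x ∈ s, x ∉ t → ∀ y ∈ t, y < x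

/-- The shift-extension relation `r ◁ s`: `min r < min s` and `r \ {min r}` is a proper
initial segment of `s`. -/
def ShiftExt (r s : Finset ℕ) : Prop :=
  ∃ m ∈ r, (∀ x ∈ r, m ≤ x) ∧ (∀ y ∈ s, m < y) ∧ FinsetProperInitSeg (r.erase m) s

/-- A map `f` from a barrier `B` into `X` is good for the relation `le`. -/
def GoodOn {X : Type*} (le : X → X → Prop) (B : Set (Finset ℕ)) (f : Finset ℕ → X) : Prop :=
  ∃ s ∈ B, ∃ t ∈ B, ShiftExt s t ∧ le (f s) (f t)

/-- Well quasi-order for a relation: every `ℕ`-sequence is good. -/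
def IsWqoRel {X : Type*} (le : X → X → Prop) : Prop :=
  ∀ p : ℕ → X, ∃ i j : ℕ, i < j ∧ le (p i) (p j)

/-- Better quasi-order: every map from every barrier is good. -/
def IsBqoRel {X : Type*} (le : X → X → Prop) : Prop :=
  ∀ B : Set (Finset ℕ), IsBarrier B → ∀ f : Finset ℕ → X, GoodOn le B f

/-- The (strict) lexicographic order on finite subsets of `ℕ`:
`r < s` iff `r ≠ s` and the least element of the symmetric difference belongs to `r`. -/
def FinsetLexLt (r s : Finset ℕ) : Prop :=
  r ≠ s ∧ ∀ m ∈ symmDiff r s, (∀ x ∈ symmDiff r s, m ≤ x) → m ∈ r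

/-- The barrier `B` has lexicographic order type `≤ α`: there is a lex-strictly-increasing
ordinal-valued function on `B` bounded by `α`. -/
def BarrierTypeLE (B : Set (Finset ℕ)) (α : Ordinal.{0}) : Prop :=
  ∃ g : Finset ℕ → Ordinal.{0}, (∀ b ∈ B, g b < α) ∧
    ∀ b₁ ∈ B, ∀ b₂ ∈ B, FinsetLexLt b₁ b₂ → g b₁ < g b₂

/-- `α`-wqo: every map from a barrier of order type `≤ α` is good. -/
def IsAlphaWqoRel {X : Type*} (le : X → X → Prop) (α : Ordinal.{0}) : Prop :=
  ∀ B : Set (Finset ℕ), IsBarrier B → BarrierTypeLE B α →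
    ∀ f : Finset ℕ → X, GoodOn le B f

/-- `σ`-bqo: a wqo which is a countable union of sets, each bqo in the induced order. -/
def IsSigmaBqoRel {X : Type*} (le : X → X → Prop) : Prop :=
  IsWqoRel le ∧
  ∃ S : ℕ → Set X, (⋃ n, S n) = Set.univ ∧
    ∀ n, IsBqoRel (fun x y : S n => le x.1 y.1)

/-- Sequences of length `α` from `P`. -/
abbrev OrdSeq (P : Type u) (α : Ordinal.{0}) := {β : Ordinal.{0} // β < α} → P

/-- The embeddability quasi-order on `P^α`. -/
def OrdSeqLE {P : Type u} [Preorder P] {α : Ordinal.{0}} (f g : OrdSeq P α) : Prop :=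
  ∃ ρ : {β : Ordinal.{0} // β < α} → {β : Ordinal.{0} // β < α},
    StrictMono ρ ∧ ∀ γ, f γ ≤ g (ρ γ)

/-- Sequences of length `< α` from `P`. -/
abbrev OrdSeqLt (P : Type u) (α : Ordinal.{0}) :=
  Σ β : {β : Ordinal.{0} // β < α}, ({γ : Ordinal.{0} // γ < β.1} → P)

/-- The embeddability quasi-order on `P^{<α}`. -/
def OrdSeqLtLE {P : Type u} [Preorder P] {α : Ordinal.{0}} (f g : OrdSeqLt P α) : Prop :=
  ∃ ρ : {γ : Ordinal.{0} // γ < f.1.1} → {γ : Ordinal.{0} // γ < g.1.1},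
    StrictMono ρ ∧ ∀ δ, f.2 δ ≤ g.2 (ρ δ)

/-- The Dress–Schiffels relation: `f ≤DS g` iff `f i < g i` for every `i` maximal in
`Δ(f,g) = {j | f j ≠ g j}`. -/
def DSle {I : Type u} [PartialOrder I] {P : I → Type v} [∀ i, PartialOrder (P i)]
    (f g : ∀ i, P i) : Prop :=
  ∀ i : I, Maximal (fun j => f j ≠ g j) i → f i < g i

/-- The underlying set of the Dress–Schiffels product: finitely supported functions. -/
abbrev DSProd (I : Type u) [PartialOrder I] (P : I → Type v) [∀ i, PartialOrder (P i)]
    [∀ i, OrderBot (P i)] :=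
  {f : ∀ i, P i // {i | f i ≠ ⊥}.Finite}

/-!
Send a sequence of length `< α` to its principal initial segment of `P^{<α}`, and `p : α → P`
to the initial segment generated by its proper restrictions `p|β`, `β < α`. Both maps reflect
the order, so they pull the wqo property back. For the second map this means that `p` embeds
into `q` as soon as every `p|β` embeds into some `q|γ`. As `α` is a limit, every `p|(β + 1)`
then embeds into `q`, and sending each `β` to the least value at `β` of such an embedding of
`p|(β + 1)` is an embedding of `p` itself: for `β' < β` any embedding of `p|(β + 1)` restricts
to one of `p|(β' + 1)`.
-/

theorem IsWqoRel.of_map {X Y : Type*} {leX : X → X → Prop} {leY : Y → Y → Prop} (e : X → Y)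
    (he : ∀ x y, leY (e x) (e y) → leX x y) (h : IsWqoRel leY) : IsWqoRel leX := fun p =>
  let ⟨i, j, hij, hle⟩ := h (e ∘ p)
  ⟨i, j, hij, he _ _ hle⟩

theorem exists_strictMono_le_of_forall_Iic {I J P : Type*} [Preorder I] [LinearOrder J]
    [WellFoundedLT J] [LE P] (f : I → P) (g : J → P)
    (h : ∀ i, ∃ σ : Iic i → J, StrictMono σ ∧ ∀ k : Iic i, f k.1 ≤ g (σ k)) :
    ∃ ρ : I → J, StrictMono ρ ∧ ∀ i, f i ≤ g (ρ i) := by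
  let S : I → Set J := fun i =>
    {j | ∃ σ : Iic i → J, StrictMono σ ∧ (∀ k : Iic i, f k.1 ≤ g (σ k)) ∧ σ ⟨i, le_rfl⟩ = j}
  have hS : ∀ i, (S i).Nonempty := fun i =>
    let ⟨σ, hσ, hle⟩ := h i
    ⟨_, σ, hσ, hle, rfl⟩
  let ρ : I → J := fun i => wellFounded_lt.min (S i) (hS i)
  have hρ : ∀ i, ρ i ∈ S i := fun i => wellFounded_lt.min_mem _ _
  refine ⟨ρ, fun i i' hii' => ?_, fun i => ?_⟩
  · obtain ⟨σ, hσ, hle, hσi'⟩ := hρ i'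
    have hσi : σ ⟨i, hii'.le⟩ ∈ S i :=
      ⟨fun k => σ ⟨k, k.2.trans hii'.le⟩, fun _ _ hab => hσ hab,
        fun k => hle ⟨k, k.2.trans hii'.le⟩, rfl⟩
    calc ρ i ≤ σ ⟨i, hii'.le⟩ := wellFounded_lt.min_le hσi
      _ < σ ⟨i', le_rfl⟩ := hσ hii'
      _ = ρ i' := hσi'
  · obtain ⟨σ, -, hle, hσi⟩ := hρ i
    exact hσi ▸ hle ⟨i, le_rfl⟩

section OrdSeq

variable {P : Type u} [Preorder P] {α : Ordinal.{0}}

theorem ordSeqLtLE_refl (s : OrdSeqLt P α) : OrdSeqLtLE s s :=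
  ⟨id, strictMono_id, fun _ => le_rfl⟩

theorem ordSeqLtLE_trans {s t u : OrdSeqLt P α} (hst : OrdSeqLtLE s t) (htu : OrdSeqLtLE t u) :
    OrdSeqLtLE s u :=
  let ⟨ρ, hρ, hle⟩ := hst
  let ⟨σ, hσ, hle'⟩ := htu
  ⟨σ ∘ ρ, hσ.comp hρ, fun δ => (hle δ).trans (hle' (ρ δ))⟩

def OrdSeq.restrict (p : OrdSeq P α) (β : {β : Ordinal.{0} // β < α}) : OrdSeqLt P α :=
  ⟨β, fun γ => p ⟨γ.1, γ.2.trans β.2⟩⟩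

theorem ordSeqLE_of_forall_restrict (hα : Order.IsSuccLimit α) {p q : OrdSeq P α}
    (h : ∀ β, ∃ γ, OrdSeqLtLE (p.restrict β) (q.restrict γ)) : OrdSeqLE p q := by
  refine exists_strictMono_le_of_forall_Iic p q fun i => ?_
  obtain ⟨γ, τ, hτ, hle⟩ := h ⟨Order.succ i.1, hα.succ_lt i.2⟩
  exact ⟨fun k => ⟨(τ ⟨k.1.1, Order.lt_succ_of_le k.2⟩).1, (τ _).2.trans γ.2⟩,
    fun _ _ hab => hτ hab, fun k => hle ⟨k.1.1, Order.lt_succ_of_le k.2⟩⟩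

def OrdSeqLt.downClosure (S : Set (OrdSeqLt P α)) :
    {A : Set (OrdSeqLt P α) // ∀ s t : OrdSeqLt P α, OrdSeqLtLE s t → t ∈ A → s ∈ A} :=
  ⟨{s | ∃ t ∈ S, OrdSeqLtLE s t}, fun _ _ hst ⟨u, hu, htu⟩ => ⟨u, hu, ordSeqLtLE_trans hst htu⟩⟩

theorem OrdSeqLt.exists_le_of_downClosure_subset {S T : Set (OrdSeqLt P α)} {s : OrdSeqLt P α}
    (hST : (downClosure S).1 ⊆ (downClosure T).1) (hs : s ∈ S) : ∃ t ∈ T, OrdSeqLtLE s t :=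
  hST ⟨s, hs, ordSeqLtLE_refl s⟩

end OrdSeq

/-- For a limit ordinal `α > 0`, if the poset `I(P^{<α})` of initial segments of `P^{<α}`
ordered by inclusion is wqo, then both `P^α` and `P^{<α}` are wqo. -/
theorem stmt_3 {P : Type u} [PartialOrder P] (α : Ordinal.{0}) (hα : Order.IsSuccLimit α)
    (h : IsWqoRel (fun A B : {A : Set (OrdSeqLt P α) //
        ∀ s t : OrdSeqLt P α, OrdSeqLtLE s t → t ∈ A → s ∈ A} => A.1 ⊆ B.1)) :
    IsWqoRel (OrdSeqLE (P := P) (α := α)) ∧ IsWqoRel (OrdSeqLtLE (P := P) (α := α)) := by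
  constructor
  · refine IsWqoRel.of_map (fun p => OrdSeqLt.downClosure (range p.restrict))
      (fun p q hpq => ordSeqLE_of_forall_restrict hα fun β => ?_) h
    obtain ⟨_, ⟨γ, rfl⟩, hle⟩ := OrdSeqLt.exists_le_of_downClosure_subset hpq (mem_range_self β)
    exact ⟨γ, hle⟩
  · refine IsWqoRel.of_map (fun s => OrdSeqLt.downClosure {s}) (fun s t hst => ?_) h
    obtain ⟨_, rfl, hle⟩ := OrdSeqLt.exists_le_of_downClosure_subset hst rfl
    exact hle
end

section
/- Suppose Q is a σ-bqo poset and ⟨P_q : q ∈ Q⟩ is a family of σ-bqo posets. Then the lexicographic sum Σ_{q∈Q} P_q is σ-bqo. -/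
universe u v

open Set

/-!
The wqo part is the usual argument: pass to a subsequence whose first coordinates are monotone;
either they increase strictly somewhere, or they are constant and the fibre is wqo. The pieces
of the sum are the sets `{(q, p) | q ∈ Q_a, p ∈ P_{q,b}}`, lexicographic sums of bqos over a bqo.

A bad map `f` from a barrier `B` into such a sum is refuted with the Nash-Williams partition
theorem, applied to the barrier `B² = {s ∪ t | s ◁ t}`: on some sub-barrier the first coordinate
of `f` is perfect (`s ◁ t → (f s).1 ≤ (f t).1`). Badness turns `≤` into `=`, so the first
coordinate is constant there, and the fibre over that constant receives a bad map.
-/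

def tailAbove (N : Set ℕ) (s : Finset ℕ) : Set ℕ :=
  {n ∈ N | ∀ y ∈ s, y < n}

theorem tailAbove_subset (N : Set ℕ) (s : Finset ℕ) : tailAbove N s ⊆ N :=
  fun _ hn => hn.1

theorem tailAbove_empty (N : Set ℕ) : tailAbove N ∅ = N := by
  simp [tailAbove]

theorem Set.Infinite.tailAbove {N : Set ℕ} (hN : N.Infinite) (s : Finset ℕ) :
    (tailAbove N s).Infinite := by
  refine (hN.sdiff (Set.finite_Iic (s.sup id))).mono fun n hn => ⟨hn.1, fun y hy => ?_⟩
  exact (Finset.le_sup (f := id) hy).trans_lt (not_le.1 hn.2)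

theorem Set.Infinite.inter_Ici {X : Set ℕ} (hX : X.Infinite) (n : ℕ) :
    (X ∩ Set.Ici n).Infinite := by
  refine (hX.sdiff (Set.finite_Iio n)).mono fun x hx => ?_
  simp only [Set.mem_sdiff, Set.mem_Iio, not_lt] at hx
  exact hx

theorem natInitSeg_union {s : Finset ℕ} {Y : Set ℕ} (hY : ∀ n ∈ Y, ∀ y ∈ s, y < n) :
    NatInitSeg s (↑s ∪ Y) := by
  refine ⟨Set.subset_union_left, fun x hx hxs y hy => ?_⟩
  rcases hx with hx | hx
  · exact absurd hx hxs
  · exact hY x hx y hy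

namespace NatInitSeg

variable {r r' : Finset ℕ} {X : Set ℕ}

theorem subset_or_subset (h : NatInitSeg r X) (h' : NatInitSeg r' X) : r ⊆ r' ∨ r' ⊆ r := by
  by_contra! hc
  obtain ⟨a, ha, ha'⟩ := Finset.not_subset.1 hc.1
  obtain ⟨b, hb, hb'⟩ := Finset.not_subset.1 hc.2
  exact lt_asymm (h'.2 a (h.1 ha) ha' b hb) (h.2 b (h'.1 hb) hb' a ha)

theorem mem_of_isLeast (h : NatInitSeg r X) (hr : r.Nonempty) {m : ℕ} (hm : IsLeast X m) :
    m ∈ r := by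
  by_contra hmr
  obtain ⟨y, hy⟩ := hr
  exact (h.2 m hm.1 hmr y hy).not_ge (hm.2 (h.1 hy))

end NatInitSeg

namespace IsBarrier

variable {B : Set (Finset ℕ)}

theorem eq_of_natInitSeg (hB : IsBarrier B) {r r' : Finset ℕ} {X : Set ℕ} (hr : r ∈ B)
    (hr' : r' ∈ B) (h : NatInitSeg r X) (h' : NatInitSeg r' X) : r = r' := by
  rcases h.subset_or_subset h' with hs | hs
  · exact hB.2.1 r hr r' hr' hs
  · exact (hB.2.1 r' hr' r hr hs).symm

theorem empty_notMem (hB : IsBarrier B) : ∅ ∉ B := fun h =>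
  hB.1 ((Set.finite_singleton ∅).subset fun b hb => (hB.2.1 ∅ h b hb b.empty_subset).symm)

theorem nonempty_of_mem (hB : IsBarrier B) {b : Finset ℕ} (hb : b ∈ B) : b.Nonempty :=
  Finset.nonempty_iff_ne_empty.2 fun h => hB.empty_notMem (h ▸ hb)

theorem base_infinite (hB : IsBarrier B) : (⋃ b ∈ B, (↑b : Set ℕ)).Infinite := fun hfin =>
  hB.1 <| hfin.toFinset.powerset.finite_toSet.subset fun _ hb =>
    Finset.mem_powerset.2 fun _ hx => hfin.mem_toFinset.2 (Set.mem_biUnion hb hx)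

end IsBarrier

theorem infinite_of_forall_natInitSeg {D : Set (Finset ℕ)} {N : Set ℕ} (hN : N.Infinite)
    (h : ∀ X ⊆ N, X.Infinite → ∃ r ∈ D, NatInitSeg r X) (hD : ∅ ∉ D) : D.Infinite := by
  intro hfin
  have hU : (⋃ b ∈ D, (↑b : Set ℕ)).Finite := hfin.biUnion fun b _ => b.finite_toSet
  obtain ⟨r, hr, hrX⟩ := h _ Set.sdiff_subset (hN.sdiff hU)
  obtain ⟨x, hx⟩ := Finset.nonempty_iff_ne_empty.2 fun h0 => hD (h0 ▸ hr)
  exact (hrX.1 hx).2 (Set.mem_biUnion hr hx)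

theorem IsBarrier.restrict {B : Set (Finset ℕ)} (hB : IsBarrier B) {N : Set ℕ}
    (hN : N ⊆ ⋃ b ∈ B, (↑b : Set ℕ)) (hNi : N.Infinite) : IsBarrier {b ∈ B | ↑b ⊆ N} := by
  have hseg : ∀ X ⊆ N, X.Infinite → ∃ r ∈ {b ∈ B | ↑b ⊆ N}, NatInitSeg r X := by
    intro X hXN hXi
    obtain ⟨r, hr, hrX⟩ := hB.2.2 X (hXN.trans hN) hXi
    exact ⟨r, ⟨hr, hrX.1.trans hXN⟩, hrX⟩
  refine ⟨infinite_of_forall_natInitSeg hNi hseg fun h => hB.empty_notMem h.1,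
    fun x hx y hy => hB.2.1 x hx.1 y hy.1, fun X hX => hseg X fun x hx => ?_⟩
  obtain ⟨b, hb, hxb⟩ := Set.mem_iUnion₂.1 (hX hx)
  exact hb.2 hxb

theorem exists_subset_infinite_forall_mem {Q : Finset ℕ → Set ℕ → Prop}
    (hmono : ∀ s {X Y : Set ℕ}, Y ⊆ X → Q s X → Q s Y)
    (hex : ∀ s X, X.Infinite → ∃ Y ⊆ X, Y.Infinite ∧ Q s Y) (S : Finset (Finset ℕ))
    {X : Set ℕ} (hX : X.Infinite) : ∃ Y ⊆ X, Y.Infinite ∧ ∀ s ∈ S, Q s Y := by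
  induction S using Finset.induction_on with
  | empty => exact ⟨X, subset_rfl, hX, by simp⟩
  | insert a S _ ih =>
    obtain ⟨Y, hYX, hY, hYS⟩ := ih
    obtain ⟨Z, hZY, hZ, hZa⟩ := hex a Y hY
    refine ⟨Z, hZY.trans hYX, hZ, Finset.forall_mem_insert _ _ _ |>.2 ⟨hZa, ?_⟩⟩
    exact fun s hs => hmono s hZY (hYS s hs)

theorem exists_fusion_sequence {Q : Finset ℕ → Set ℕ → Prop}
    (hmono : ∀ s {X Y : Set ℕ}, Y ⊆ X → Q s X → Q s Y)
    (hex : ∀ s X, X.Infinite → ∃ Y ⊆ X, Y.Infinite ∧ Q s Y) {M : Set ℕ} (hM : M.Infinite) :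
    ∃ X : ℕ → Set ℕ, X 0 = M ∧ (∀ i, (X i).Infinite) ∧
      (∀ i, X (i + 1) ⊆ tailAbove (X i) {sInf (X i)}) ∧
      ∀ i, ∀ s ∈ (Finset.range (sInf (X i) + 1)).powerset, Q s (X (i + 1)) := by
  have hstep : ∀ X : Set ℕ, X.Infinite → ∃ Y ⊆ tailAbove X {sInf X}, Y.Infinite ∧
      ∀ s ∈ (Finset.range (sInf X + 1)).powerset, Q s Y := fun X hX =>
    exists_subset_infinite_forall_mem hmono hex _ (hX.tailAbove _)
  choose! step hstep_sub hstep_inf hstep_Q using hstep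
  have hX_succ (i : ℕ) : step^[i + 1] M = step (step^[i] M) := Function.iterate_succ_apply' _ _ _
  have hX_inf (i : ℕ) : (step^[i] M).Infinite := by
    induction i with
    | zero => exact hM
    | succ i ih => rw [hX_succ]; exact hstep_inf _ ih
  refine ⟨fun i => step^[i] M, rfl, hX_inf, fun i => ?_, fun i => ?_⟩ <;> dsimp only <;>
    rw [hX_succ]
  exacts [hstep_sub _ (hX_inf i), hstep_Q _ (hX_inf i)]

/-- Fusion: `N` collects the minima of a fusion sequence `X`, and the part of `N` above `s`
lies in the member of `X` that secures `Q s`. -/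
theorem exists_subset_infinite_forall_tailAbove {Q : Finset ℕ → Set ℕ → Prop}
    (hmono : ∀ s {X Y : Set ℕ}, Y ⊆ X → Q s X → Q s Y)
    (hex : ∀ s X, X.Infinite → ∃ Y ⊆ X, Y.Infinite ∧ Q s Y) {M : Set ℕ} (hM : M.Infinite) :
    ∃ N ⊆ M, N.Infinite ∧ ∀ s : Finset ℕ, ↑s ⊆ N → Q s (tailAbove N s) := by
  obtain ⟨X, hX0, hX_inf, hX_succ_sub, hX_Q⟩ := exists_fusion_sequence hmono hex hM
  have hX_anti : Antitone X :=
    antitone_nat_of_succ_le fun i => (hX_succ_sub i).trans (tailAbove_subset _ _)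
  set a : ℕ → ℕ := fun i => sInf (X (i + 1))
  have ha_mem (i : ℕ) : a i ∈ X (i + 1) := Nat.sInf_mem (hX_inf _).nonempty
  have ha_mono : StrictMono a := strictMono_nat_of_lt_succ fun i =>
    (hX_succ_sub (i + 1) (ha_mem (i + 1))).2 _ (Finset.mem_singleton_self _)
  have hrange (j : ℕ) : {k | j ≤ k}.image a ⊆ X (j + 1) := by
    rintro _ ⟨k, hk, rfl⟩
    exact hX_anti (Nat.succ_le_succ hk) (ha_mem k)
  refine ⟨Set.range a, ?_, Set.infinite_range_of_injective ha_mono.injective, fun s hs => ?_⟩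
  · rintro _ ⟨k, rfl⟩
    exact hX0 ▸ hX_anti (Nat.zero_le _) (ha_mem k)
  obtain ⟨j, hsj, htail⟩ :
      ∃ j, (∀ y ∈ s, y ≤ sInf (X j)) ∧ tailAbove (Set.range a) s ⊆ X (j + 1) := by
    rcases s.eq_empty_or_nonempty with rfl | hne
    · refine ⟨0, by simp, ?_⟩
      rintro _ ⟨⟨k, rfl⟩, -⟩
      exact hrange 0 ⟨k, Nat.zero_le k, rfl⟩
    · obtain ⟨i, hi⟩ := hs (s.max'_mem hne)
      refine ⟨i + 1, fun y hy => (s.le_max' y hy).trans_eq hi.symm, ?_⟩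
      rintro _ ⟨⟨k, rfl⟩, hk⟩
      exact hrange (i + 1) ⟨k, ha_mono.lt_iff_lt.1 (hi ▸ hk _ (s.max'_mem hne)), rfl⟩
  refine hmono s htail (hX_Q j s (Finset.mem_powerset.2 fun y hy => ?_))
  exact Finset.mem_range.2 (Nat.lt_succ_of_le (hsj y hy))

namespace NashWilliams

variable (F : Set (Finset ℕ))

def Accepts (X : Set ℕ) (s : Finset ℕ) : Prop :=
  ∀ Y ⊆ X, Y.Infinite → ∃ t ∈ F, NatInitSeg t (↑s ∪ Y)

def Rejects (X : Set ℕ) (s : Finset ℕ) : Prop :=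
  ∀ Y ⊆ X, Y.Infinite → ¬ Accepts F Y s

variable {F}

theorem Accepts.mono {X Y : Set ℕ} {s : Finset ℕ} (hYX : Y ⊆ X) (h : Accepts F X s) :
    Accepts F Y s :=
  fun Z hZ => h Z (hZ.trans hYX)

theorem Rejects.mono {X Y : Set ℕ} {s : Finset ℕ} (hYX : Y ⊆ X) (h : Rejects F X s) :
    Rejects F Y s :=
  fun Z hZ => h Z (hZ.trans hYX)

theorem exists_accepts_or_rejects {X : Set ℕ} (hX : X.Infinite) (s : Finset ℕ) :
    ∃ Y ⊆ X, Y.Infinite ∧ (Accepts F Y s ∨ Rejects F Y s) := by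
  by_cases h : Rejects F X s
  · exact ⟨X, subset_rfl, hX, Or.inr h⟩
  · simp only [Rejects, not_forall, not_not] at h
    obtain ⟨Y, hYX, hY, hacc⟩ := h
    exact ⟨Y, hYX, hY, Or.inl hacc⟩

theorem accepts_tailAbove_of_mem {r : Finset ℕ} (hr : r ∈ F) (N : Set ℕ) :
    Accepts F (tailAbove N r) r :=
  fun _ hY _ => ⟨r, hr, natInitSeg_union fun _ hn => (hY hn).2⟩

/-- Split an infinite `Y ⊆ Z` as its minimum `n` followed by the rest. -/
theorem accepts_of_forall_accepts_insert {N Z : Set ℕ} {s : Finset ℕ}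
    (hZ : Z ⊆ tailAbove N s)
    (h : ∀ n ∈ Z, Accepts F (tailAbove N (insert n s)) (insert n s)) : Accepts F Z s := by
  intro Y hYZ hY
  set n := sInf Y
  have hnY : n ∈ Y := Nat.sInf_mem hY.nonempty
  have hrest : Y \ {n} ⊆ tailAbove N (insert n s) := by
    intro y hy
    have hny : n < y := (Nat.sInf_le hy.1).lt_of_ne fun h => hy.2 h.symm
    refine ⟨(hZ (hYZ hy.1)).1, Finset.forall_mem_insert _ _ _ |>.2 ⟨hny, ?_⟩⟩
    exact (hZ (hYZ hy.1)).2
  obtain ⟨t, htF, ht⟩ := h n (hYZ hnY) _ hrest (hY.sdiff (Set.finite_singleton n))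
  refine ⟨t, htF, ?_⟩
  rwa [Finset.coe_insert, Set.insert_union, ← Set.union_insert, Set.insert_sdiff_singleton,
    Set.insert_eq_of_mem hnY] at ht

theorem finite_setOf_not_rejects_insert {N : Set ℕ}
    (hdec : ∀ s : Finset ℕ, ↑s ⊆ N → Accepts F (tailAbove N s) s ∨ Rejects F (tailAbove N s) s)
    {s : Finset ℕ} (hs : ↑s ⊆ N) (hrej : Rejects F (tailAbove N s) s) :
    {n ∈ tailAbove N s | ¬ Rejects F (tailAbove N (insert n s)) (insert n s)}.Finite := by
  by_contra hinf
  refine hrej _ (Set.sep_subset _ _) hinf (accepts_of_forall_accepts_insert (Set.sep_subset _ _)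
    fun n hn => (hdec _ ?_).resolve_right hn.2)
  rw [Finset.coe_insert]
  exact Set.insert_subset hn.1.1 hs

end NashWilliams

open NashWilliams in
/-- First find `N₁` deciding every finite subset of itself. If `N₁` accepts `∅` we are done;
otherwise thin `N₁` to `N₂`, all of whose finite subsets are rejected, so none lies in `F`. -/
theorem nashWilliams (F : Set (Finset ℕ)) {M : Set ℕ} (hM : M.Infinite) :
    ∃ N ⊆ M, N.Infinite ∧
      ((∀ X ⊆ N, X.Infinite → ∃ r ∈ F, NatInitSeg r X) ∨ ∀ r ∈ F, ¬ ↑r ⊆ N) := by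
  obtain ⟨N₁, hN₁M, hN₁, hdec⟩ := exists_subset_infinite_forall_tailAbove
    (Q := fun s Y => Accepts F Y s ∨ Rejects F Y s)
    (fun _ _ _ h => Or.imp (Accepts.mono h) (Rejects.mono h))
    (fun s _ hX => exists_accepts_or_rejects hX s) hM
  rcases hdec ∅ (by simp) with hacc | hrej
  · refine ⟨N₁, hN₁M, hN₁, Or.inl fun X hX hXi => ?_⟩
    rw [tailAbove_empty] at hacc
    simpa using hacc X hX hXi
  obtain ⟨N₂, hN₂N₁, hN₂, hext⟩ := exists_subset_infinite_forall_tailAbove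
    (Q := fun s Y => ↑s ⊆ N₁ → Rejects F (tailAbove N₁ s) s →
      ∀ n ∈ Y ∩ tailAbove N₁ s, Rejects F (tailAbove N₁ (insert n s)) (insert n s))
    (fun _ _ _ hYX h hs hr n hn => h hs hr n ⟨hYX hn.1, hn.2⟩)
    (fun s X hX => by
      by_cases h : ↑s ⊆ N₁ ∧ Rejects F (tailAbove N₁ s) s
      · have hfin := finite_setOf_not_rejects_insert hdec h.1 h.2
        refine ⟨X \ _, Set.sdiff_subset, hX.sdiff hfin, fun _ _ n hn => ?_⟩
        by_contra hnrej
        exact hn.1.2 ⟨hn.2, hnrej⟩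
      · exact ⟨X, subset_rfl, hX, fun hs hr => absurd ⟨hs, hr⟩ h⟩) hN₁
  have hrejAll (s : Finset ℕ) (hs : ↑s ⊆ N₂) : Rejects F (tailAbove N₁ s) s := by
    induction s using Finset.induction_on_max with
    | empty => exact hrej
    | insert n s hlt ih =>
      rw [Finset.coe_insert] at hs
      have hsN₂ : ↑s ⊆ N₂ := (Set.subset_insert _ _).trans hs
      refine hext s hsN₂ (hsN₂.trans hN₂N₁) (ih hsN₂) n ⟨⟨hs (Set.mem_insert _ _), hlt⟩, ?_⟩
      exact ⟨hN₂N₁ (hs (Set.mem_insert _ _)), hlt⟩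
  refine ⟨N₂, hN₂N₁.trans hN₁M, hN₂, Or.inr fun r hr hrN₂ => ?_⟩
  exact hrejAll r hrN₂ _ subset_rfl (hN₁.tailAbove r) (accepts_tailAbove_of_mem hr N₁)

theorem IsBarrier.exists_forall_or_forall_not {B : Set (Finset ℕ)} (hB : IsBarrier B)
    (p : Finset ℕ → Prop) :
    ∃ N ⊆ ⋃ b ∈ B, (↑b : Set ℕ), N.Infinite ∧
      ((∀ u ∈ B, ↑u ⊆ N → p u) ∨ ∀ u ∈ B, ↑u ⊆ N → ¬ p u) := by
  obtain ⟨N, hNB, hN, hall | hnone⟩ := nashWilliams {u ∈ B | p u} hB.base_infinite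
  · refine ⟨N, hNB, hN, Or.inl fun u hu huN => ?_⟩
    have huX := natInitSeg_union (s := u) (Y := tailAbove N u) fun _ hn => hn.2
    obtain ⟨r, ⟨hrB, hr⟩, hrX⟩ := hall _ (Set.union_subset huN (tailAbove_subset _ _))
      ((hN.tailAbove u).mono Set.subset_union_right)
    exact hB.eq_of_natInitSeg hrB hu hrX huX ▸ hr
  · exact ⟨N, hNB, hN, Or.inr fun u hu huN hp => hnone u ⟨hu, hp⟩ huN⟩

namespace ShiftExt

variable {s t : Finset ℕ}

theorem irrefl (s : Finset ℕ) : ¬ ShiftExt s s := fun ⟨m, hm, _, hlt, _⟩ => lt_irrefl m (hlt m hm)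

theorem natInitSeg_union (h : ShiftExt s t) : NatInitSeg s ↑(s ∪ t) := by
  obtain ⟨m, -, -, hlt, -, -, hseg⟩ := h
  refine ⟨by simp, fun x hx hxs y hy => ?_⟩
  have hxt : x ∈ t := (Finset.mem_union.1 hx).resolve_left hxs
  by_cases hym : y = m
  · exact hym ▸ hlt x hxt
  · exact hseg x hxt (fun hc => hxs (Finset.mem_of_mem_erase hc)) y (Finset.mem_erase.2 ⟨hym, hy⟩)

theorem union_erase (h : ShiftExt s t) {m : ℕ} (hm : m ∈ s ∪ t) (hmin : ∀ x ∈ s ∪ t, m ≤ x) :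
    (s ∪ t).erase m = t := by
  obtain ⟨m₀, hm₀, hmin₀, hlt, hsub, -, -⟩ := h
  obtain rfl : m₀ = m := (hmin m₀ (Finset.mem_union_left t hm₀)).antisymm' <| by
    rcases Finset.mem_union.1 hm with hm | hm
    exacts [hmin₀ m hm, (hlt m hm).le]
  ext x
  simp only [Finset.mem_erase, Finset.mem_union]
  refine ⟨fun ⟨hxm, hx⟩ => hx.elim (fun hx => hsub (Finset.mem_erase.2 ⟨hxm, hx⟩)) id,
    fun hx => ⟨(hlt x hx).ne', Or.inr hx⟩⟩

theorem exists_isLeast (h : ShiftExt s t) : ∃ m ∈ s, ∀ x ∈ s ∪ t, m ≤ x := by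
  obtain ⟨m, hm, hmin, hlt, -⟩ := h
  exact ⟨m, hm, fun x hx => (Finset.mem_union.1 hx).elim (hmin x) fun hx => (hlt x hx).le⟩

end ShiftExt

namespace IsBarrier

variable {B : Set (Finset ℕ)}

theorem shiftExt_of_natInitSeg (hB : IsBarrier B) {X : Set ℕ} {m : ℕ} (hm : IsLeast X m)
    {r r' : Finset ℕ} (hr : r ∈ B) (hrX : NatInitSeg r X) (hr' : r' ∈ B)
    (hr'X : NatInitSeg r' (X \ {m})) : ShiftExt r r' := by
  have hmr : m ∈ r := hrX.mem_of_isLeast (hB.nonempty_of_mem hr) hm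
  have hgt : ∀ y ∈ r', m < y := fun y hy =>
    (hm.2 (hr'X.1 hy).1).lt_of_ne fun h => (hr'X.1 hy).2 h.symm
  have herase : NatInitSeg (r.erase m) (X \ {m}) := by
    refine ⟨fun x hx => ?_, fun x hx hxe y hy => ?_⟩
    · obtain ⟨hxm, hxr⟩ := Finset.mem_erase.1 hx
      exact ⟨hrX.1 hxr, hxm⟩
    · exact hrX.2 x hx.1 (fun hxr => hxe (Finset.mem_erase.2 ⟨hx.2, hxr⟩)) y
        (Finset.mem_of_mem_erase hy)
  -- `r'` cannot sit inside `r.erase m`, for then `r' ⊆ r` forces `r' = r ∋ m`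
  have hnot : ¬ r' ⊆ r.erase m := fun hsub =>
    lt_irrefl m (hgt m (hB.2.1 r' hr' r hr (hsub.trans (r.erase_subset m)) ▸ hmr))
  have hsub : r.erase m ⊆ r' := (herase.subset_or_subset hr'X).resolve_right hnot
  exact ⟨m, hmr, fun x hx => hm.2 (hrX.1 hx), hgt, hsub, fun h => hnot (h ▸ subset_rfl),
    fun x hx hxe y hy => herase.2 x (hr'X.1 hx) hxe y hy⟩

theorem apply_eq_of_shiftExt_of_inter_Ici (hB : IsBarrier B) {α : Type*} {G : Finset ℕ → α}
    (hG : ∀ s ∈ B, ∀ t ∈ B, ShiftExt s t → G s = G t) {X : Set ℕ}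
    (hXB : X ⊆ ⋃ b ∈ B, (↑b : Set ℕ)) (hX : X.Infinite) (n : ℕ) {r r' : Finset ℕ} (hr : r ∈ B)
    (hrX : NatInitSeg r X) (hr' : r' ∈ B) (hr'X : NatInitSeg r' (X ∩ Set.Ici n)) :
    G r = G r' := by
  induction n generalizing r' with
  | zero =>
    rw [show X ∩ Set.Ici 0 = X by ext; simp] at hr'X
    rw [hB.eq_of_natInitSeg hr hr' hrX hr'X]
  | succ n ih =>
    obtain ⟨r'', hr'', hr''X⟩ := hB.2.2 _ (Set.inter_subset_left.trans hXB) (hX.inter_Ici n)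
    rw [ih hr'' hr''X]
    by_cases hn : n ∈ X
    · have hleast : IsLeast (X ∩ Set.Ici n) n := ⟨⟨hn, Set.self_mem_Ici⟩, fun x hx => hx.2⟩
      refine hG r'' hr'' r' hr' (hB.shiftExt_of_natInitSeg hleast hr'' hr''X hr' ?_)
      convert hr'X using 1
      ext x
      simp only [Set.mem_sdiff, Set.mem_inter_iff, Set.mem_Ici, Set.mem_singleton_iff]
      exact ⟨fun ⟨⟨hx, hnx⟩, hxn⟩ => ⟨hx, by omega⟩, fun ⟨hx, hnx⟩ => ⟨⟨hx, by omega⟩, by omega⟩⟩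
    · have hXeq : X ∩ Set.Ici (n + 1) = X ∩ Set.Ici n := by
        ext x
        simp only [Set.mem_inter_iff, Set.mem_Ici]
        exact ⟨fun h => ⟨h.1, by omega⟩, fun h => ⟨h.1, (h.2.lt_of_ne fun e => hn (e ▸ h.1))⟩⟩
      rw [hXeq] at hr'X
      rw [hB.eq_of_natInitSeg hr'' hr' hr''X hr'X]

/-- Every `u ⊆ s ∪ t` in `B` is the initial segment of `u ∪ Y`, where `Y` is the part of the
base above `s ∪ t`, so `G u` equals `G` of the initial segment of `Y`. -/
theorem apply_eq_of_shiftExt (hB : IsBarrier B) {α : Type*} (G : Finset ℕ → α)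
    (hG : ∀ s ∈ B, ∀ t ∈ B, ShiftExt s t → G s = G t) : ∀ s ∈ B, ∀ t ∈ B, G s = G t := by
  intro s hs t ht
  set Y := ⋃ b ∈ B, (↑b : Set ℕ)
  set a := (s ∪ t).sup id + 1
  have hYa : (Y ∩ Set.Ici a).Infinite := hB.base_infinite.inter_Ici a
  obtain ⟨r, hr, hrY⟩ := hB.2.2 _ Set.inter_subset_left hYa
  have hlt : ∀ y ∈ s ∪ t, y < a := fun y hy => Nat.lt_succ_of_le (Finset.le_sup (f := id) hy)
  suffices ∀ u ∈ B, u ⊆ s ∪ t → G u = G r from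
    (this s hs Finset.subset_union_left).trans (this t ht Finset.subset_union_right).symm
  intro u hu hust
  have hbelow : ∀ y ∈ u, y < a := fun y hy => hlt y (hust hy)
  refine hB.apply_eq_of_shiftExt_of_inter_Ici hG
    (Set.union_subset (fun x hx => Set.mem_biUnion hu hx) Set.inter_subset_left)
    (hYa.mono Set.subset_union_right) a hu
    (natInitSeg_union fun n hn y hy => (hbelow y hy).trans_le hn.2) hr ?_
  convert hrY using 1
  ext x
  simp only [Set.mem_inter_iff, Set.mem_union, Finset.mem_coe, Set.mem_Ici]
  exact ⟨fun ⟨h, hx⟩ => ⟨(h.resolve_left fun hxu => (hbelow x hxu).not_ge hx).1, hx⟩,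
    fun ⟨h, hx⟩ => ⟨Or.inr ⟨h, hx⟩, hx⟩⟩

end IsBarrier

/-- The family usually written `B²`. -/
def barrierSq (B : Set (Finset ℕ)) : Set (Finset ℕ) :=
  {u | ∃ s ∈ B, ∃ t ∈ B, ShiftExt s t ∧ s ∪ t = u}

namespace IsBarrier

variable {B : Set (Finset ℕ)}

theorem base_barrierSq_subset :
    ⋃ u ∈ barrierSq B, (↑u : Set ℕ) ⊆ ⋃ b ∈ B, (↑b : Set ℕ) := by
  simp only [Set.iUnion₂_subset_iff]
  rintro _ ⟨s, hs, t, ht, -, rfl⟩ x hx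
  rcases Finset.mem_union.1 hx with hx | hx
  exacts [Set.mem_biUnion hs hx, Set.mem_biUnion ht hx]

theorem exists_barrierSq_natInitSeg (hB : IsBarrier B) {X : Set ℕ}
    (hXB : X ⊆ ⋃ b ∈ B, (↑b : Set ℕ)) (hX : X.Infinite) : ∃ u ∈ barrierSq B, NatInitSeg u X := by
  set m := sInf X
  have hm : IsLeast X m := ⟨Nat.sInf_mem hX.nonempty, fun x hx => Nat.sInf_le hx⟩
  obtain ⟨r, hr, hrX⟩ := hB.2.2 X hXB hX
  obtain ⟨r', hr', hr'X⟩ :=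
    hB.2.2 _ (Set.sdiff_subset.trans hXB) (hX.sdiff (Set.finite_singleton m))
  have hmr : m ∈ r := hrX.mem_of_isLeast (hB.nonempty_of_mem hr) hm
  refine ⟨r ∪ r', ⟨r, hr, r', hr', hB.shiftExt_of_natInitSeg hm hr hrX hr' hr'X, rfl⟩, ?_, ?_⟩
  · rw [Finset.coe_union]
    exact Set.union_subset hrX.1 (hr'X.1.trans Set.sdiff_subset)
  · intro x hx hxu y hy
    have hx' : x ∈ X \ {m} := ⟨hx, fun h => hxu (Finset.mem_union_left _ (h ▸ hmr))⟩
    rcases Finset.mem_union.1 hy with hy | hy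
    · exact hrX.2 x hx (fun h => hxu (Finset.mem_union_left _ h)) y hy
    · exact hr'X.2 x hx' (fun h => hxu (Finset.mem_union_right _ h)) y hy

theorem barrierSq (hB : IsBarrier B) : IsBarrier (barrierSq B) := by
  refine ⟨infinite_of_forall_natInitSeg hB.base_infinite
    (fun X hXB hX => hB.exists_barrierSq_natInitSeg hXB hX) ?_, ?_,
    fun X hX => hB.exists_barrierSq_natInitSeg (hX.trans base_barrierSq_subset)⟩
  · rintro ⟨s, -, t, -, hst, hu⟩
    obtain ⟨m, hm, -⟩ := hst.exists_isLeast
    exact Finset.notMem_empty m (hu ▸ Finset.mem_union_left t hm)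
  rintro _ ⟨s, hs, t, ht, hst, rfl⟩ _ ⟨s', hs', t', ht', hst', rfl⟩ hsub
  obtain ⟨m, hm, hmin⟩ := hst.exists_isLeast
  obtain ⟨m', hm', hmin'⟩ := hst'.exists_isLeast
  have hm_u : m ∈ s ∪ t := Finset.mem_union_left t hm
  have hm'_u' : m' ∈ s' ∪ t' := Finset.mem_union_left t' hm'
  by_cases hm'u : m' ∈ s ∪ t
  · -- both unions start at `m`, and their tails `t ⊆ t'` are then equal
    obtain rfl : m = m' := (hmin m' hm'u).antisymm (hmin' m (hsub hm_u))
    have htt' : t = t' := hB.2.1 t ht t' ht' <| by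
      rw [← hst.union_erase hm_u hmin, ← hst'.union_erase hm'_u' hmin']
      exact Finset.erase_subset_erase m hsub
    rw [← Finset.insert_erase hm_u, ← Finset.insert_erase hm'_u', hst.union_erase hm_u hmin,
      hst'.union_erase hm'_u' hmin', htt']
  · -- otherwise `s ∪ t ⊆ t'`, forcing `s = t' = t`
    have hsub' : s ∪ t ⊆ t' := by
      rw [← hst'.union_erase hm'_u' hmin']
      exact fun x hx => Finset.mem_erase.2 ⟨fun h => hm'u (h ▸ hx), hsub hx⟩
    have hst' : s = t' := hB.2.1 s hs t' ht' (Finset.subset_union_left.trans hsub')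
    have hts : t = s := hB.2.1 t ht s hs (hst' ▸ Finset.subset_union_right.trans hsub')
    exact absurd (hts ▸ hst) (ShiftExt.irrefl s)

theorem eq_of_shiftExt_union (hB : IsBarrier B) {s t s' t' : Finset ℕ} (ht : t ∈ B)
    (hs' : s' ∈ B) (hst : ShiftExt s t) (hst' : ShiftExt s' t')
    (h : ShiftExt (s ∪ t) (s' ∪ t')) : t = s' := by
  obtain ⟨m, hm, hmin, -, hsub, -, hseg⟩ := h
  rw [hst.union_erase hm hmin] at hsub hseg
  exact hB.eq_of_natInitSeg ht hs' ⟨by exact_mod_cast hsub, fun x hx => hseg x hx⟩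
    hst'.natInitSeg_union

end IsBarrier

/-- Colour `u = s ∪ t ∈ B²` by whether `f s ≤ f t` fails. A sub-barrier of `B²` of the bad
colour is impossible: by `eq_of_shiftExt_union`, goodness of `u ↦ f s` on it contradicts the
colouring. -/
theorem IsBqoRel.exists_perfect {X : Type*} {le : X → X → Prop} (hle : IsBqoRel le)
    {B : Set (Finset ℕ)} (hB : IsBarrier B) (f : Finset ℕ → X) :
    ∃ N ⊆ ⋃ b ∈ B, (↑b : Set ℕ), N.Infinite ∧
      ∀ s ∈ B, ∀ t ∈ B, ↑s ⊆ N → ↑t ⊆ N → ShiftExt s t → le (f s) (f t) := by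
  obtain ⟨N, hNB, hN, hall | hnone⟩ := hB.barrierSq.exists_forall_or_forall_not
    fun u => ∃ s ∈ B, ∃ t ∈ B, ShiftExt s t ∧ s ∪ t = u ∧ ¬ le (f s) (f t)
  · exfalso
    choose! fs hfs ft hft hst hunion hbad using hall
    obtain ⟨u, hu, u', hu', huu', hle'⟩ :=
      hle _ (hB.barrierSq.restrict hNB hN) fun u => f (fs u)
    have heq : ft u = fs u' := by
      refine hB.eq_of_shiftExt_union (hft u hu.1 hu.2) (hfs u' hu'.1 hu'.2) (hst u hu.1 hu.2)
        (hst u' hu'.1 hu'.2) ?_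
      rwa [hunion u hu.1 hu.2, hunion u' hu'.1 hu'.2]
    exact hbad u hu.1 hu.2 (heq ▸ hle')
  · refine ⟨N, hNB.trans IsBarrier.base_barrierSq_subset, hN, fun s hs t ht hsN htN hst => ?_⟩
    by_contra hbad
    refine hnone (s ∪ t) ⟨s, hs, t, ht, hst, rfl⟩ ?_ ⟨s, hs, t, ht, hst, rfl, hbad⟩
    rw [Finset.coe_union]
    exact Set.union_subset hsN htN

theorem Sigma.lex_of_fst_eq {ι : Type*} {α : ι → Type*} {r : ι → ι → Prop}
    {s : ∀ i, α i → α i → Prop} {x y : Σ i, α i} {i : ι} (hx : x.1 = i) (hy : y.1 = i)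
    (h : s i (hx ▸ x.2) (hy ▸ y.2)) : Sigma.Lex r s x y := by
  subst hx
  obtain ⟨_, x⟩ := x
  obtain ⟨_, y⟩ := y
  dsimp only at hy h
  subst hy
  exact .right _ _ h

section LexSum

variable {Q : Type*} [PartialOrder Q] {P : Q → Type*} {r : ∀ q, P q → P q → Prop}

theorem WellQuasiOrdered.sigmaLex (hQ : WellQuasiOrdered ((· ≤ ·) : Q → Q → Prop))
    (hP : ∀ q, WellQuasiOrdered (r q)) : WellQuasiOrdered (Sigma.Lex (· < ·) r) := by
  intro p
  obtain ⟨g, hg⟩ := hQ.exists_monotone_subseq fun n => (p n).1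
  by_cases hlt : ∃ i j, i < j ∧ (p (g i)).1 < (p (g j)).1
  · obtain ⟨i, j, hij, hlt⟩ := hlt
    exact ⟨g i, g j, g.strictMono hij, .left _ _ hlt⟩
  push Not at hlt
  have heq (n : ℕ) : (p (g n)).1 = (p (g 0)).1 := by
    rcases n.eq_zero_or_pos with rfl | hn
    · rfl
    · exact ((hg 0 n n.zero_le).eq_of_not_lt (hlt 0 n hn)).symm
  obtain ⟨i, j, hij, hle⟩ := hP _ fun n => heq n ▸ (p (g n)).2
  exact ⟨g i, g j, g.strictMono hij, Sigma.lex_of_fst_eq _ _ hle⟩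

theorem IsBqoRel.sigmaLex (hQ : IsBqoRel ((· ≤ ·) : Q → Q → Prop)) (hP : ∀ q, IsBqoRel (r q)) :
    IsBqoRel (Sigma.Lex (· < ·) r) := by
  classical
  intro B hB f
  by_contra hbad
  obtain ⟨N, hNB, hN, hperf⟩ := hQ.exists_perfect hB fun s => (f s).1
  have hB' := hB.restrict hNB hN
  obtain ⟨s₀, hs₀⟩ := hB'.1.nonempty
  have hfst : ∀ s ∈ {b ∈ B | ↑b ⊆ N}, (f s).1 = (f s₀).1 := by
    refine fun s hs => hB'.apply_eq_of_shiftExt (fun s => (f s).1) (fun s hs t ht hst => ?_)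
      s hs s₀ hs₀
    exact (hperf s hs.1 t ht.1 hs.2 ht.2 hst).eq_of_not_lt fun hlt =>
      hbad ⟨s, hs.1, t, ht.1, hst, .left _ _ hlt⟩
  obtain ⟨s, hs, t, ht, hst, hle⟩ := hP (f s₀).1 _ hB'
    fun s => if h : (f s).1 = (f s₀).1 then h ▸ (f s).2 else (f s₀).2
  simp only [dif_pos (hfst s hs), dif_pos (hfst t ht)] at hle
  exact hbad ⟨s, hs.1, t, ht.1, hst, Sigma.lex_of_fst_eq _ _ hle⟩

theorem IsBqoRel.comap {X Y : Type*} {leX : X → X → Prop} {leY : Y → Y → Prop}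
    (h : IsBqoRel leY) (e : X → Y) (he : ∀ a b, leY (e a) (e b) → leX a b) : IsBqoRel leX :=
  fun B hB f =>
    let ⟨s, hs, t, ht, hst, hle⟩ := h B hB (e ∘ f)
    ⟨s, hs, t, ht, hst, he _ _ hle⟩

theorem IsSigmaBqoRel.sigmaLex (hQ : IsSigmaBqoRel ((· ≤ ·) : Q → Q → Prop))
    (hP : ∀ q, IsSigmaBqoRel (r q)) : IsSigmaBqoRel (Sigma.Lex (· < ·) r) := by
  obtain ⟨hQw, SQ, hSQ, hSQbqo⟩ := hQ
  choose SP hSP hSPbqo using fun q => (hP q).2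
  refine ⟨WellQuasiOrdered.sigmaLex hQw fun q => (hP q).1,
    fun n => {x | x.1 ∈ SQ n.unpair.1 ∧ x.2 ∈ SP x.1 n.unpair.2}, ?_, fun n => ?_⟩
  · refine Set.eq_univ_of_forall fun x => Set.mem_iUnion.2 ?_
    obtain ⟨a, ha⟩ := Set.mem_iUnion.1 (hSQ.symm ▸ Set.mem_univ x.1 : x.1 ∈ ⋃ a, SQ a)
    obtain ⟨b, hb⟩ := Set.mem_iUnion.1 ((hSP x.1).symm ▸ Set.mem_univ x.2 : x.2 ∈ ⋃ b, SP x.1 b)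
    exact ⟨Nat.pair a b, by simpa using ⟨ha, hb⟩⟩
  have hpiece := IsBqoRel.sigmaLex (P := fun q : SQ n.unpair.1 => SP q.1 n.unpair.2)
    (r := fun q x y => r q.1 x.1 y.1) (hSQbqo _) fun q => hSPbqo q.1 _
  refine hpiece.comap
    (fun x => (⟨⟨x.1.1, x.2.1⟩, ⟨x.1.2, x.2.2⟩⟩ : Σ q : SQ n.unpair.1, SP q.1 n.unpair.2)) ?_
  rintro ⟨⟨q₁, p₁⟩, _⟩ ⟨⟨q₂, p₂⟩, _⟩ h
  cases h with
  | left _ _ h => exact .left _ _ h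
  | right _ _ h => exact .right _ _ h

end LexSum

/-- A lexicographic sum of `σ`-bqo posets over a `σ`-bqo poset is `σ`-bqo. -/
theorem stmt_7 {Q : Type u} [PartialOrder Q] {P : Q → Type v} [∀ q, PartialOrder (P q)]
    (hQ : IsSigmaBqoRel ((· ≤ ·) : Q → Q → Prop))
    (hP : ∀ q, IsSigmaBqoRel ((· ≤ ·) : P q → P q → Prop)) :
    IsSigmaBqoRel (fun x y : Σ q : Q, P q =>
      x.1 < y.1 ∨ ∃ h : x.1 = y.1, h ▸ x.2 ≤ y.2) := by
  have hlex : (fun x y : Σ q : Q, P q => x.1 < y.1 ∨ ∃ h : x.1 = y.1, h ▸ x.2 ≤ y.2) =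
      Sigma.Lex (· < ·) fun _ => (· ≤ ·) := by
    funext x y
    rw [Sigma.lex_iff]
  rw [hlex]
  exact hQ.sigmaLex hP
end
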